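/- arXiv:1710.07634 — 2 statements merged into one kernel-verified Lean document; each statement's English description precedes it below -/
import Mathlib

section
/- (Cauchy formula for repeated integration.) Let f : ℝ → ℝ be continuous, let a ∈ ℝ, and define the iterates Iⁿ_a f recursively by (I¹_a f)(x) = ∫_a^x f(t) dt and (Iⁿ⁺¹_a f)(x) = ∫_a^x (Iⁿ_a f)(x₁) dx₁. Then for every n ≥ 1 and every x ∈ ℝ, (Iⁿ_a f)(x) = (1/(n−1)!) · ∫_a^x (x − t)^{n−1} · f(t) dt. -/
open MeasureTheory intervalIntegral Finset

/-- The `n`-fold iterated integral operator with base point `a`: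
`iterInt a f 0 = f`, and `iterInt a f (n+1) x = ∫_a^x (iterInt a f n)(t) dt`.
In particular `iterInt a f 1` is `x ↦ ∫_a^x f(t) dt`. -/
noncomputable def iterInt (a : ℝ) (f : ℝ → ℝ) : ℕ → ℝ → ℝ
  | 0 => f
  | n + 1 => fun x => ∫ t in a..x, iterInt a f n t

section Aux
variable {f : ℝ → ℝ}

lemma expandH (hf : Continuous f) (a : ℝ) (m : ℕ) (y : ℝ) :
    (∫ s in a..y, (y - s) ^ m * f s) =
      ∑ k ∈ Finset.range (m + 1),
        ((-1 : ℝ) ^ (k + m) * (m.choose k : ℝ)) *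
          (y ^ k * ∫ s in a..y, s ^ (m - k) * f s) := by
  have h1 : ∀ s : ℝ, (y - s) ^ m * f s =
      ∑ k ∈ Finset.range (m + 1),
        ((-1 : ℝ) ^ (k + m) * (m.choose k : ℝ)) * (y ^ k * (s ^ (m - k) * f s)) := by
    intro s
    rw [sub_pow, Finset.sum_mul]
    exact Finset.sum_congr rfl fun k _ => by ring
  simp_rw [h1]
  rw [intervalIntegral.integral_finset_sum]
  · exact Finset.sum_congr rfl fun k _ => by
      rw [intervalIntegral.integral_const_mul, intervalIntegral.integral_const_mul]
  · intro k _
    exact ((continuous_const.mul (continuous_const.mul ((continuous_pow _).mul hf)))).intervalIntegrable _ _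

lemma hI (hf : Continuous f) (a x : ℝ) (j : ℕ) :
    HasDerivAt (fun y => ∫ s in a..y, s ^ j * f s) (x ^ j * f x) x := by
  have hc : Continuous fun s : ℝ => s ^ j * f s := (continuous_pow j).mul hf
  exact intervalIntegral.integral_hasDerivAt_right (hc.intervalIntegrable _ _)
    hc.aestronglyMeasurable.stronglyMeasurableAtFilter hc.continuousAt

lemma contH (hf : Continuous f) (a : ℝ) (m : ℕ) :
    Continuous fun y => ∫ s in a..y, (y - s) ^ m * f s := by
  have : (fun y => ∫ s in a..y, (y - s) ^ m * f s) =
      fun y => ∑ k ∈ Finset.range (m + 1),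
        ((-1 : ℝ) ^ (k + m) * (m.choose k : ℝ)) *
          (y ^ k * ∫ s in a..y, s ^ (m - k) * f s) := funext (expandH hf a m)
  rw [this]
  refine continuous_finset_sum _ fun k _ => continuous_const.mul ((continuous_pow k).mul ?_)
  exact continuous_iff_continuousAt.mpr fun x => (hI hf a x (m - k)).continuousAt

lemma keyDeriv (hf : Continuous f) (a x : ℝ) (m : ℕ) :
    HasDerivAt (fun y => ∫ s in a..y, (y - s) ^ (m + 1) * f s)
      (((m : ℝ) + 1) * ∫ s in a..x, (x - s) ^ m * f s) x := by
  have hsum : HasDerivAt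
      (fun y => ∑ k ∈ Finset.range (m + 2),
        ((-1 : ℝ) ^ (k + (m + 1)) * ((m + 1).choose k : ℝ)) *
          (y ^ k * ∫ s in a..y, s ^ (m + 1 - k) * f s))
      (∑ k ∈ Finset.range (m + 2),
        ((-1 : ℝ) ^ (k + (m + 1)) * ((m + 1).choose k : ℝ)) *
          ((k : ℝ) * x ^ (k - 1) * (∫ s in a..x, s ^ (m + 1 - k) * f s)
            + x ^ k * (x ^ (m + 1 - k) * f x))) x := by
    refine HasDerivAt.fun_sum fun k _ => ?_
    exact ((hasDerivAt_pow k x).mul (hI hf a x (m + 1 - k))).const_mul _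
  have hfun : (fun y => ∫ s in a..y, (y - s) ^ (m + 1) * f s) =
      (fun y => ∑ k ∈ Finset.range (m + 2),
        ((-1 : ℝ) ^ (k + (m + 1)) * ((m + 1).choose k : ℝ)) *
          (y ^ k * ∫ s in a..y, s ^ (m + 1 - k) * f s)) := funext (expandH hf a (m + 1))
  rw [hfun]
  convert hsum using 1
  -- now prove the derivative values agree
  simp_rw [mul_add]
  rw [Finset.sum_add_distrib]
  have h2 : (∑ k ∈ Finset.range (m + 2),
      ((-1 : ℝ) ^ (k + (m + 1)) * ((m + 1).choose k : ℝ)) *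
        (x ^ k * (x ^ (m + 1 - k) * f x))) = (x - x) ^ (m + 1) * f x := by
    rw [sub_pow, Finset.sum_mul]
    exact Finset.sum_congr rfl fun k _ => by ring
  rw [h2]
  simp only [sub_self, zero_pow (Nat.succ_ne_zero m), zero_mul, add_zero]
  rw [Finset.sum_range_succ']
  simp only [Nat.cast_zero, zero_mul, mul_zero, add_zero]
  rw [expandH hf a m, Finset.mul_sum]
  refine Finset.sum_congr rfl fun j hj => ?_
  have hc : (((m + 1).choose (j + 1) : ℕ) : ℝ) * ((j : ℝ) + 1) = ((m : ℝ) + 1) * (m.choose j : ℝ) := by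
    exact_mod_cast congrArg (Nat.cast : ℕ → ℝ) (Nat.add_one_mul_choose_eq m j).symm
  have hsign : ((-1 : ℝ)) ^ (j + 1 + (m + 1)) = (-1 : ℝ) ^ (j + m) := by
    rw [show j + 1 + (m + 1) = (j + m) + 2 by ring, pow_add]
    norm_num
  simp only [Nat.add_sub_cancel, Nat.cast_add, Nat.cast_one, hsign]
  have : (m + 1 - (j + 1)) = m - j := by omega
  rw [this]
  linear_combination (-(-1 : ℝ) ^ (j + m) * x ^ j * (∫ s in a..x, s ^ (m - j) * f s)) * hc

lemma intH (hf : Continuous f) (a x : ℝ) (k : ℕ) :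
    ((k : ℝ) + 1) * (∫ t in a..x, ∫ s in a..t, (t - s) ^ k * f s) =
      ∫ s in a..x, (x - s) ^ (k + 1) * f s := by
  set g : ℝ → ℝ := fun y =>
    ((k : ℝ) + 1) * (∫ t in a..y, ∫ s in a..t, (t - s) ^ k * f s) -
      ∫ s in a..y, (y - s) ^ (k + 1) * f s with hg_def
  have hC := contH hf a k
  have hg : ∀ y, HasDerivAt g 0 y := by
    intro y
    have h1 : HasDerivAt (fun z => ∫ t in a..z, ∫ s in a..t, (t - s) ^ k * f s)
        (∫ s in a..y, (y - s) ^ k * f s) y :=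
      intervalIntegral.integral_hasDerivAt_right (hC.intervalIntegrable _ _)
        hC.aestronglyMeasurable.stronglyMeasurableAtFilter hC.continuousAt
    have h2 := keyDeriv hf a y k
    have h3 := (h1.const_mul ((k : ℝ) + 1)).sub h2
    exact h3.congr_deriv (by ring)
  have hconst : g x = g a :=
    is_const_of_deriv_eq_zero (fun y => (hg y).differentiableAt) (fun y => (hg y).deriv) x a
  have hga : g a = 0 := by simp [hg_def]
  have := hconst.trans hga
  rw [hg_def] at this
  simpa [sub_eq_zero] using this

end Aux

/-- Cauchy formula for repeated integration: for `n ≥ 1`,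
`(Iⁿ_a f)(x) = (1/(n−1)!) ∫_a^x (x − t)^(n−1) f(t) dt`. -/
theorem cauchy_repeated_integration (f : ℝ → ℝ) (hf : Continuous f) (a : ℝ)
    (n : ℕ) (hn : 1 ≤ n) (x : ℝ) :
    iterInt a f n x =
      (1 / (Nat.factorial (n - 1) : ℝ)) * ∫ t in a..x, (x - t) ^ (n - 1) * f t := by
  obtain ⟨k, rfl⟩ : ∃ k, n = k + 1 := ⟨n - 1, (Nat.succ_pred_eq_of_pos hn).symm⟩
  clear hn
  induction k generalizing x with
  | zero => simp [iterInt]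
  | succ k ih =>
    have hrw : (∫ t in a..x, iterInt a f (k + 1) t) =
        ∫ t in a..x, (1 / (Nat.factorial k : ℝ)) * ∫ s in a..t, (t - s) ^ k * f s :=
      intervalIntegral.integral_congr fun t _ => by simpa using ih t
    rw [show iterInt a f (k + 1 + 1) x = ∫ t in a..x, iterInt a f (k + 1) t from rfl, hrw,
      intervalIntegral.integral_const_mul]
    have h := intH hf a x k
    have hk1 : ((k : ℝ) + 1) ≠ 0 := by positivity
    have hfac : ((Nat.factorial k : ℝ)) ≠ 0 := by positivity
    rw [show k + 1 + 1 - 1 = k + 1 from rfl, Nat.factorial_succ]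
    push_cast
    rw [← h]
    field_simp
end

section
/- (Riemann–Liouville fractional derivative of a monomial, real order — main formula.) Let m be a natural number, let α > 0 be a real number that is not an integer, set n = ⌊α⌋ + 1, and let a < x be real numbers. Then the n-th iterated derivative of the function y ↦ (1/Γ(n−α)) · ∫_a^y (y − t)^{n−α−1} · (t − a)^m dt, evaluated at x, equals (Γ(m+1)/Γ(m−α+1)) · (x − a)^{m−α}. -/
open MeasureTheory intervalIntegral Real

open Finset Filter Topology in
private lemma gamma_rec_aux (q : ℝ) : ∀ k : ℕ, (∀ j : ℕ, j < k → q + j ≠ 0) →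
    Real.Gamma (q + k) = (∏ j ∈ Finset.range k, (q + j)) * Real.Gamma q
  | 0, _ => by simp
  | (k+1), h => by
    have h1 : q + ((k:ℕ)+1 : ℕ) = (q + k) + 1 := by push_cast; ring
    rw [h1, Real.Gamma_add_one (h k (Nat.lt_succ_self k)),
      gamma_rec_aux q k (fun j hj => h j (hj.trans (Nat.lt_succ_self k))),
      Finset.prod_range_succ]
    ring

open Filter Topology in
private lemma rpow_iter_aux (a K p : ℝ) : ∀ (k : ℕ) (x : ℝ), a < x →
    iteratedDeriv k (fun y => K * (y - a) ^ p) x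
      = (K * ∏ i ∈ Finset.range k, (p - i)) * (x - a) ^ (p - k)
  | 0, x, hx => by simp
  | (k+1), x, hx => by
    rw [iteratedDeriv_succ]
    have hev : iteratedDeriv k (fun y => K * (y - a) ^ p)
        =ᶠ[𝓝 x] fun y => (K * ∏ i ∈ Finset.range k, (p - i)) * (y - a) ^ (p - k) :=
      Filter.eventuallyEq_of_mem (Ioi_mem_nhds hx) fun y hy => rpow_iter_aux a K p k y hy
    rw [hev.deriv_eq]
    have hx0 : x - a ≠ 0 := sub_ne_zero.2 hx.ne'
    have h1 : HasDerivAt (fun y : ℝ => y - a) 1 x := (hasDerivAt_id x).sub_const a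
    have hd : HasDerivAt (fun y : ℝ => (y - a) ^ (p - (k:ℝ)))
        ((p - k) * (x - a) ^ (p - (k:ℝ) - 1)) x := by
      simpa [Function.comp_def] using (Real.hasDerivAt_rpow_const (p := p - (k:ℝ)) (Or.inl hx0)).comp x h1
    rw [(hd.const_mul _).deriv, Finset.prod_range_succ]
    push_cast
    rw [show p - ((k:ℝ) + 1) = p - (k:ℝ) - 1 from by ring]
    ring

private lemma beta_real_aux (m : ℕ) (β : ℝ) (hβ : 0 < β) :
    (∫ v in (0:ℝ)..1, v ^ m * (1 - v) ^ (β - 1))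
      = m.factorial / ∏ j ∈ Finset.range (m + 1), (β + j) := by
  have h1 : ((∫ v in (0:ℝ)..1, v ^ m * (1 - v) ^ (β - 1) : ℝ) : ℂ)
      = Complex.betaIntegral ((m:ℂ) + 1) β := by
    rw [Complex.betaIntegral, ← intervalIntegral.integral_ofReal]
    refine intervalIntegral.integral_congr fun v hv => ?_
    rw [Set.uIcc_of_le zero_le_one] at hv
    obtain ⟨h0, hle⟩ := hv
    rw [add_sub_cancel_right, Complex.cpow_natCast,
      show ((β:ℂ) - 1) = ((β - 1 : ℝ) : ℂ) from by push_cast; ring,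
      show (1 - (v:ℂ)) = (((1 - v : ℝ)) : ℂ) from by push_cast; ring,
      ← Complex.ofReal_cpow (by linarith : (0:ℝ) ≤ 1 - v)]
    push_cast
    ring
  have h2 : Complex.betaIntegral ((m:ℂ) + 1) β = Complex.betaIntegral (β:ℂ) ((m:ℂ) + 1) :=
    Complex.betaIntegral_symm _ _
  have h3 : Complex.betaIntegral (β:ℂ) ((m:ℂ) + 1)
      = (m.factorial : ℂ) / ∏ j ∈ Finset.range (m + 1), ((β:ℂ) + j) :=
    Complex.betaIntegral_eval_nat_add_one_right (by simpa using hβ) m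
  have h4 : ((m.factorial / ∏ j ∈ Finset.range (m + 1), (β + j) : ℝ) : ℂ)
      = (m.factorial : ℂ) / ∏ j ∈ Finset.range (m + 1), ((β:ℂ) + j) := by
    push_cast
    ring
  exact_mod_cast h1.trans (h2.trans (h3.trans h4.symm))

/-- Riemann–Liouville fractional derivative of the monomial `(t − a)^m` of real order
`α > 0` (α not an integer), with `n = ⌊α⌋ + 1`:
`(ₐD_x^α (· − a)^m)(x) = (Γ(m+1)/Γ(m−α+1)) (x − a)^(m−α)`. -/
theorem rl_fractional_derivative_monomial_real (m : ℕ) (α : ℝ) (hα : 0 < α)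
    (hαint : ∀ k : ℤ, α ≠ (k : ℝ)) (n : ℕ) (hn : (n : ℤ) = ⌊α⌋ + 1)
    (a x : ℝ) (hax : a < x) :
    iteratedDeriv n
      (fun y => (1 / Real.Gamma ((n : ℝ) - α)) *
        ∫ t in a..y, (y - t) ^ ((n : ℝ) - α - 1) * (t - a) ^ m)
      x =
      (Real.Gamma ((m : ℝ) + 1) / Real.Gamma ((m : ℝ) - α + 1)) * (x - a) ^ ((m : ℝ) - α) := by
  have hnr : (n : ℝ) = (⌊α⌋ : ℝ) + 1 := by exact_mod_cast congrArg (Int.cast : ℤ → ℝ) hn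
  have hαn : α < (n : ℝ) := by rw [hnr]; exact Int.lt_floor_add_one α
  set β : ℝ := (n : ℝ) - α with hβdef
  have hβ0 : 0 < β := sub_pos.2 hαn
  have hne : ∀ z : ℤ, (z : ℝ) - α ≠ 0 := fun z h => hαint z (by linarith)
  set P1 : ℝ := ∏ j ∈ Finset.range (m + 1), (β + j) with hP1def
  have hP1 : 0 < P1 := Finset.prod_pos fun j _ => by positivity
  -- closed form of the integral for y > a
  have key : ∀ y : ℝ, a < y →
      (∫ t in a..y, (y - t) ^ (β - 1) * (t - a) ^ m)
        = (m.factorial / P1) * (y - a) ^ (β + m) := by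
    intro y hy
    set c : ℝ := y - a with hcdef
    have hc0 : 0 < c := sub_pos.2 hy
    have e1 : (∫ t in a..y, (y - t) ^ (β - 1) * (t - a) ^ m)
        = ∫ u in (0:ℝ)..c, (c - u) ^ (β - 1) * u ^ m := by
      have h := intervalIntegral.integral_comp_add_right (a := (0:ℝ)) (b := c)
        (fun t => (y - t) ^ (β - 1) * (t - a) ^ m) a
      rw [zero_add, show c + a = y from by rw [hcdef]; ring] at h
      rw [← h]
      refine intervalIntegral.integral_congr fun u _ => ?_
      rw [show y - (u + a) = c - u from by rw [hcdef]; ring, add_sub_cancel_right]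
    have e2 : (∫ u in (0:ℝ)..c, (c - u) ^ (β - 1) * u ^ m)
        = c * ∫ v in (0:ℝ)..1, (c - c * v) ^ (β - 1) * (c * v) ^ m := by
      have h := intervalIntegral.integral_comp_mul_left (a := (0:ℝ)) (b := 1)
        (fun u => (c - u) ^ (β - 1) * u ^ m) hc0.ne'
      rw [mul_zero, mul_one] at h
      rw [h, smul_eq_mul, ← mul_assoc, mul_inv_cancel₀ hc0.ne', one_mul]
    have e3 : (∫ v in (0:ℝ)..1, (c - c * v) ^ (β - 1) * (c * v) ^ m)
        = (c ^ (β - 1) * c ^ m) * ∫ v in (0:ℝ)..1, v ^ m * (1 - v) ^ (β - 1) := by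
      rw [← intervalIntegral.integral_const_mul]
      refine intervalIntegral.integral_congr fun v hv => ?_
      rw [Set.uIcc_of_le zero_le_one] at hv
      obtain ⟨h0, hle⟩ := hv
      rw [show c - c * v = c * (1 - v) from by ring,
        Real.mul_rpow hc0.le (by linarith), mul_pow]
      ring
    have hcc : c * (c ^ (β - 1) * (c : ℝ) ^ m) = c ^ (β + m) := by
      rw [← Real.rpow_natCast c m, ← Real.rpow_add hc0,
        show c * c ^ (β - 1 + (m:ℝ)) = c ^ (1:ℝ) * c ^ (β - 1 + (m:ℝ)) from
          by rw [Real.rpow_one], ← Real.rpow_add hc0]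
      congr 1
      ring
    rw [e1, e2, e3, beta_real_aux m β hβ0, ← hP1def]
    linear_combination ((m.factorial : ℝ) / P1) * hcc
  -- pass to the closed form
  set K : ℝ := (1 / Real.Gamma β) * (m.factorial / P1) with hKdef
  have hev : (fun y => (1 / Real.Gamma β) *
        ∫ t in a..y, (y - t) ^ (β - 1) * (t - a) ^ m)
      =ᶠ[nhds x] fun y => K * (y - a) ^ (β + m) :=
    Filter.eventuallyEq_of_mem (Ioi_mem_nhds hax) fun y hy => by
      simp only [key y hy, hKdef]; ring
  rw [hev.iteratedDeriv_eq n, rpow_iter_aux a K (β + m) n x hax,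
    show β + (m:ℝ) - n = (m:ℝ) - α from by rw [hβdef]; ring]
  -- now the constant computation
  have hn1 : 1 ≤ n := by
    have h0 : (0:ℤ) ≤ ⌊α⌋ := Int.floor_nonneg.2 hα.le
    omega
  congr 1
  have hΓβ : 0 < Real.Gamma β := Real.Gamma_pos_of_pos hβ0
  have hΓm' : Real.Gamma ((m:ℝ) - α + 1) ≠ 0 := by
    refine Real.Gamma_ne_zero fun k h => ?_
    exact hne (m + 1 + k) (by push_cast; linarith)
  have G1 : Real.Gamma (β + ((m + 1 : ℕ) : ℝ)) = P1 * Real.Gamma β := by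
    rw [hP1def]
    exact gamma_rec_aux β (m + 1) fun j _ => by positivity
  have G2 : Real.Gamma (((m:ℝ) - α + 1) + (n : ℝ))
      = (∏ i ∈ Finset.range n, ((m:ℝ) - α + 1 + i)) * Real.Gamma ((m:ℝ) - α + 1) :=
    gamma_rec_aux ((m:ℝ) - α + 1) n fun j _ h =>
      hne ((m:ℤ) + 1 + j) (by push_cast; linarith)
  have hargs : β + ((m + 1 : ℕ) : ℝ) = ((m:ℝ) - α + 1) + (n : ℝ) := by
    rw [hβdef]; push_cast; ring
  have hrefl : (∏ i ∈ Finset.range n, (β + (m:ℝ) - i))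
      = ∏ i ∈ Finset.range n, ((m:ℝ) - α + 1 + i) := by
    rw [← Finset.prod_range_reflect (fun i => (m:ℝ) - α + 1 + i) n]
    refine Finset.prod_congr rfl fun j hj => ?_
    have hjn : j < n := Finset.mem_range.1 hj
    have hcast : ((n - 1 - j : ℕ) : ℝ) = (n : ℝ) - 1 - j := by
      have hj1 : j ≤ n - 1 := by omega
      rw [Nat.cast_sub hj1, Nat.cast_sub hn1]
      push_cast
      ring
    rw [hcast, hβdef]
    ring
  have hlink : P1 * Real.Gamma β
      = (∏ i ∈ Finset.range n, (β + (m:ℝ) - i)) * Real.Gamma ((m:ℝ) - α + 1) := by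
    rw [hrefl, ← G1, ← G2, hargs]
  rw [hKdef, show Real.Gamma ((m:ℝ) + 1) = (m.factorial : ℝ) from
    by exact_mod_cast Real.Gamma_nat_eq_factorial m]
  field_simp
  linear_combination (-1 : ℝ) * hlink
end
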